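/- arXiv:1009.1076 — 7 statements merged into one kernel-verified Lean document; each statement's English description precedes it below -/
import Mathlib

section
/- Let P = {p₁, ..., p_k} ⊆ ℚ^n with k ≥ 1 be a finite set. The interior of the monoid P* equals P* ∩ (ℚ₊^{>0}·p₁ + ... + ℚ₊^{>0}·p_k), i.e., a vector a ∈ P* is interior to P* if and only if a can be written as a sum λ₁p₁ + ... + λ_k p_k with all λ_i positive rationals. -/
/-- `a` is an interior vector of the monoid `M ⊆ ℚ^n`. -/
def IsInterior {n : ℕ} (M : Set (Fin n → ℚ)) (a : Fin n → ℚ) : Prop :=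
  a ∈ M ∧ ∀ x ∈ M, ∃ N : ℕ, 1 ≤ N ∧ ∃ m ∈ M, N • a = x + m

open Finset

/-!
With `σ = ∑ p ∈ P, p`, interiority of `a ∈ P*` is equivalent to `N • a ∈ σ + P*` for some `N ≥ 1`:
the set of `x` with `N • a ∈ x + P*` for some `N ≥ 1` is a submonoid, so it is enough to reach
every generator `p`, and each `p` is a summand of `σ`. Writing the element of `P*` as `∑ c_p • p`
gives `a = ∑ (1 + c_p) / N • p`; conversely, clearing denominators of positive coefficients `λ_p`
yields `D • a = ∑ k_p • p` with integers `k_p ≥ 1`.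
-/

theorem Rat.exists_pos_nat_mul_eq_natCast {ι : Type*} (s : Finset ι) (f : ι → ℚ)
    (hf : ∀ i ∈ s, 0 ≤ f i) : ∃ D : ℕ, 0 < D ∧ ∀ i ∈ s, ∃ k : ℕ, (D : ℚ) * f i = k := by
  classical
  refine ⟨∏ j ∈ s, (f j).den, prod_pos fun j _ => (f j).den_pos, fun i hi => ?_⟩
  refine ⟨(∏ j ∈ s.erase i, (f j).den) * (f i).num.toNat, ?_⟩
  rw [← mul_prod_erase s _ hi]
  have hnum : ((f i).num.toNat : ℚ) = (f i).num := by
    exact_mod_cast Int.toNat_of_nonneg (Rat.num_nonneg.2 (hf i hi))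
  push_cast
  rw [hnum, ← Rat.den_mul_eq_num]
  ring

section
variable {n : ℕ}

theorem isInterior_closure_iff {S : Set (Fin n → ℚ)} {a : Fin n → ℚ}
    (ha : a ∈ AddSubmonoid.closure S) :
    IsInterior (AddSubmonoid.closure S) a ↔
      ∀ s ∈ S, ∃ N : ℕ, 1 ≤ N ∧ ∃ m ∈ AddSubmonoid.closure S, N • a = s + m := by
  refine ⟨fun h s hs => h.2 s (AddSubmonoid.subset_closure hs), fun h => ⟨ha, fun x hx => ?_⟩⟩
  induction hx using AddSubmonoid.closure_induction with
  | mem s hs => exact h s hs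
  | zero => exact ⟨1, le_rfl, a, ha, by simp⟩
  | add x y _ _ hx hy =>
    obtain ⟨N, hN, m, hm, hxm⟩ := hx
    obtain ⟨N', hN', m', hm', hym⟩ := hy
    refine ⟨N + N', by omega, m + m', add_mem hm hm', ?_⟩
    rw [add_nsmul, hxm, hym]
    abel

theorem isInterior_closure_finset_iff {P : Finset (Fin n → ℚ)} {a : Fin n → ℚ}
    (ha : a ∈ AddSubmonoid.closure (P : Set (Fin n → ℚ))) :
    IsInterior (AddSubmonoid.closure (P : Set (Fin n → ℚ))) a ↔
      ∃ N : ℕ, 1 ≤ N ∧ ∃ m ∈ AddSubmonoid.closure (P : Set (Fin n → ℚ)),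
        N • a = ∑ p ∈ P, p + m := by
  refine ⟨fun h => h.2 _ (sum_mem fun p hp => AddSubmonoid.subset_closure hp), ?_⟩
  rintro ⟨N, hN, m, hm, hNa⟩
  refine (isInterior_closure_iff ha).2 fun p hp => ⟨N, hN, ∑ q ∈ P.erase p, q + m, ?_, ?_⟩
  · exact add_mem (sum_mem fun q hq => AddSubmonoid.subset_closure (mem_of_mem_erase hq)) hm
  · rw [hNa, ← add_assoc, add_sum_erase P (fun q => q) hp]

theorem exists_pos_coeffs_of_nsmul_eq_sum_add {P : Finset (Fin n → ℚ)} {a m : Fin n → ℚ} {N : ℕ}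
    (hN : 1 ≤ N) (hm : m ∈ AddSubmonoid.closure (P : Set (Fin n → ℚ)))
    (hNa : N • a = ∑ p ∈ P, p + m) :
    ∃ lam : (Fin n → ℚ) → ℚ, (∀ p ∈ P, 0 < lam p) ∧ a = ∑ p ∈ P, lam p • p := by
  obtain ⟨c, -, rfl⟩ := AddSubmonoid.mem_closure_finset.1 hm
  have hNpos : (0 : ℚ) < N := by exact_mod_cast hN
  refine ⟨fun p => (1 + c p) / N, fun p _ => by positivity, ?_⟩
  have hNa' : (N : ℚ) • a = ∑ p ∈ P, ((1 + c p : ℚ)) • p := by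
    simp only [Nat.cast_smul_eq_nsmul, hNa, add_smul, one_smul, sum_add_distrib]
  rw [← inv_smul_smul₀ hNpos.ne' a, hNa', smul_sum]
  simp only [smul_smul, div_eq_inv_mul]

theorem exists_nsmul_eq_sum_add_of_pos_coeffs {P : Finset (Fin n → ℚ)} {a : Fin n → ℚ}
    {lam : (Fin n → ℚ) → ℚ} (hlam : ∀ p ∈ P, 0 < lam p) (ha : a = ∑ p ∈ P, lam p • p) :
    ∃ N : ℕ, 1 ≤ N ∧ ∃ m ∈ AddSubmonoid.closure (P : Set (Fin n → ℚ)),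
      N • a = ∑ p ∈ P, p + m := by
  obtain ⟨D, hD, hk⟩ := Rat.exists_pos_nat_mul_eq_natCast P lam fun p hp => (hlam p hp).le
  choose! k hk using hk
  have hk1 : ∀ p ∈ P, 1 ≤ k p := fun p hp => by
    have : (0 : ℚ) < k p := hk p hp ▸ mul_pos (by exact_mod_cast hD) (hlam p hp)
    exact_mod_cast this
  refine ⟨D, hD, ∑ p ∈ P, (k p - 1) • p,
    sum_mem fun p hp => nsmul_mem (AddSubmonoid.subset_closure hp) _, ?_⟩
  rw [← sum_add_distrib, ← Nat.cast_smul_eq_nsmul ℚ, ha, smul_sum]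
  refine sum_congr rfl fun p hp => ?_
  rw [smul_smul, hk p hp, Nat.cast_smul_eq_nsmul, ← succ_nsmul', Nat.sub_add_cancel (hk1 p hp)]

end

theorem stmt1_general {n : ℕ} (P : Finset (Fin n → ℚ)) (a : Fin n → ℚ) :
    IsInterior (AddSubmonoid.closure (P : Set (Fin n → ℚ)) : Set (Fin n → ℚ)) a ↔
      (a ∈ AddSubmonoid.closure (P : Set (Fin n → ℚ)) ∧
        ∃ lam : (Fin n → ℚ) → ℚ, (∀ p ∈ P, 0 < lam p) ∧ a = ∑ p ∈ P, lam p • p) := by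
  refine ⟨fun h => ⟨h.1, ?_⟩, fun ⟨ha, lam, hlam, hsum⟩ => ?_⟩
  · obtain ⟨N, hN, m, hm, hNa⟩ := (isInterior_closure_finset_iff h.1).1 h
    exact exists_pos_coeffs_of_nsmul_eq_sum_add hN hm hNa
  · exact (isInterior_closure_finset_iff ha).2 (exists_nsmul_eq_sum_add_of_pos_coeffs hlam hsum)

theorem stmt1 {n : ℕ} (P : Finset (Fin n → ℚ)) (hP : P.Nonempty) (a : Fin n → ℚ) :
    IsInterior (AddSubmonoid.closure (P : Set (Fin n → ℚ)) : Set (Fin n → ℚ)) a ↔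
      (a ∈ AddSubmonoid.closure (P : Set (Fin n → ℚ)) ∧
        ∃ lam : (Fin n → ℚ) → ℚ, (∀ p ∈ P, 0 < lam p) ∧ a = ∑ p ∈ P, lam p • p) :=
  stmt1_general P a
end

section
/- The image f(X) of a pseudo-linear set X ⊆ ℤ^n under a linear (affine) function f : ℤ^n → ℤ^{n'} given by f(x) = Ax + v is pseudo-linear. Moreover, if L is a linearization of X, then f(L) is a linearization of f(X). -/
/-!
An affine map `f` with linear part `g` sends `b + M` onto `f b + g(M)`, and `g(M)` is generated
by the images of the generators of `M`. An interior vector `r` of `g(M)` need not lift to an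
interior vector of `M`; but with `s` the sum of the generators of `M` (which is interior),
interiority of `r` yields interior `p, q` with `g p = g s + r` and `g q = (N + 1) • r`. The
monoid generated by `g s`, `g s + r` and `(N + 1) • r` contains `N • g s + k • r` for every `k`,
so a single offset `g s₀` serves all of `R'*`, and the linearization property of `X` applied to
these lifts gives a point `x` with `f (x + s₀) + R'* ⊆ f(X)`.
-/

open scoped Pointwise

/-- `a` is an interior vector of the monoid `M ⊆ ℤ^n`. -/
def IsInteriorZ {n : ℕ} (M : Set (Fin n → ℤ)) (a : Fin n → ℤ) : Prop :=
  a ∈ M ∧ ∀ x ∈ M, ∃ N : ℕ, 1 ≤ N ∧ ∃ m ∈ M, N • a = x + m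

/-- `M` is a finitely generated (additive sub)monoid of ℤ^n (as a set). -/
def IsFGMonoid {n : ℕ} (M : Set (Fin n → ℤ)) : Prop :=
  ∃ P : Finset (Fin n → ℤ),
    M = (AddSubmonoid.closure (P : Set (Fin n → ℤ)) : Set (Fin n → ℤ))

/-- `L` is a linearization of the pseudo-linear set `X`. -/
def IsLinearization {n : ℕ} (L X : Set (Fin n → ℤ)) : Prop :=
  ∃ (b : Fin n → ℤ) (M : Set (Fin n → ℤ)), IsFGMonoid M ∧ L = b +ᵥ M ∧ X ⊆ L ∧
    ∀ R : Finset (Fin n → ℤ), (∀ r ∈ R, IsInteriorZ M r) →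
      ∃ x ∈ X, x +ᵥ (AddSubmonoid.closure (R : Set (Fin n → ℤ)) : Set (Fin n → ℤ)) ⊆ X

/-- `X ⊆ ℤ^n` is pseudo-linear. -/
def IsPseudoLinear {n : ℕ} (X : Set (Fin n → ℤ)) : Prop :=
  ∃ L, IsLinearization L X

section OffsetMembership

variable {H : Type*} [AddCommMonoid H] (T : AddSubmonoid H)

theorem nsmul_add_nsmul_mem_of_add_mem {a r : H} {N : ℕ} (ha : a ∈ T) (har : a + r ∈ T)
    (hN : (N + 1) • r ∈ T) (k : ℕ) : N • a + k • r ∈ T := by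
  induction k using Nat.strong_induction_on with
  | _ k ih =>
    rcases le_or_gt k N with hk | hk
    · obtain ⟨j, rfl⟩ := Nat.exists_eq_add_of_le hk
      have hsplit : (k + j) • a + k • r = k • (a + r) + j • a := by
        rw [smul_add, add_smul]; abel
      rw [hsplit]
      exact add_mem (nsmul_mem har k) (nsmul_mem ha j)
    · obtain ⟨j, rfl⟩ : ∃ j, k = j + (N + 1) := ⟨k - (N + 1), by omega⟩
      rw [add_smul, ← add_assoc]
      exact add_mem (ih j (by omega)) hN

theorem exists_add_mem_of_forall_exists_add_nsmul_mem {R : Finset H}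
    (h : ∀ r ∈ R, ∃ o, ∀ k : ℕ, o + k • r ∈ T) :
    ∃ o, ∀ z ∈ AddSubmonoid.closure (R : Set H), o + z ∈ T := by
  choose! o ho using h
  refine ⟨∑ r ∈ R, o r, fun z hz => ?_⟩
  obtain ⟨k, -, rfl⟩ := AddSubmonoid.mem_closure_finset.mp hz
  rw [← Finset.sum_add_distrib]
  exact sum_mem fun r hr => ho r hr (k r)

end OffsetMembership

section Interior

variable {n : ℕ}

theorem isInteriorZ_sum_closure (P : Finset (Fin n → ℤ)) :
    IsInteriorZ (AddSubmonoid.closure (P : Set (Fin n → ℤ)) : Set _) (∑ p ∈ P, p) := by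
  have hgen : ∀ p ∈ P, p ∈ AddSubmonoid.closure (P : Set (Fin n → ℤ)) :=
    fun p hp => AddSubmonoid.subset_closure hp
  refine ⟨sum_mem hgen, fun x hx => ?_⟩
  induction hx using AddSubmonoid.closure_induction with
  | mem p hp =>
    exact ⟨1, le_rfl, ∑ q ∈ P.erase p, q, sum_mem fun q hq => hgen q (P.erase_subset p hq),
      by rw [one_smul]; exact (Finset.add_sum_erase P (fun q => q) hp).symm⟩
  | zero => exact ⟨1, le_rfl, ∑ p ∈ P, p, sum_mem hgen, by simp⟩
  | add x y _ _ ihx ihy =>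
    obtain ⟨N₁, hN₁, m₁, hm₁, he₁⟩ := ihx
    obtain ⟨N₂, -, m₂, hm₂, he₂⟩ := ihy
    exact ⟨N₁ + N₂, hN₁.trans (Nat.le_add_right _ _), m₁ + m₂, add_mem hm₁ hm₂, by
      rw [add_smul, he₁, he₂]; abel⟩

theorem IsInteriorZ.add_mem {M : AddSubmonoid (Fin n → ℤ)} {a m : Fin n → ℤ}
    (ha : IsInteriorZ (M : Set _) a) (hm : m ∈ M) : IsInteriorZ (M : Set _) (a + m) := by
  refine ⟨M.add_mem ha.1 hm, fun x hx => ?_⟩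
  obtain ⟨N, hN, m', hm', he⟩ := ha.2 x hx
  exact ⟨N, hN, m' + N • m, M.add_mem hm' (nsmul_mem hm N), by rw [smul_add, he]; abel⟩

theorem IsInteriorZ.exists_lift_of_map {n' : ℕ} (g : (Fin n → ℤ) →+ (Fin n' → ℤ))
    {M : AddSubmonoid (Fin n → ℤ)} {s : Fin n → ℤ} (hs : IsInteriorZ (M : Set _) s)
    {r : Fin n' → ℤ} (hr : IsInteriorZ (M.map g : Set _) r) :
    ∃ p q : Fin n → ℤ, ∃ N : ℕ, IsInteriorZ (M : Set _) p ∧ IsInteriorZ (M : Set _) q ∧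
      g p = g s + r ∧ g q = (N + 1) • r := by
  obtain ⟨m, hm, hgm⟩ := hr.1
  obtain ⟨N, hN, _, ⟨u, hu, rfl⟩, hNr⟩ := hr.2 (g s) ⟨s, hs.1, rfl⟩
  refine ⟨s + m, s + u, N - 1, hs.add_mem hm, hs.add_mem hu, by rw [map_add, hgm], ?_⟩
  rw [map_add, ← hNr, Nat.sub_add_cancel hN]

end Interior

theorem image_vadd_of_map_add {G H : Type*} [AddCommMonoid G] [AddCommMonoid H]
    (g : G →+ H) {f : G → H} (hf : ∀ x y, f (x + y) = f x + g y) (b : G) (S : Set G) :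
    f '' (b +ᵥ S) = f b +ᵥ g '' S := by
  rw [← Set.image_vadd, Set.image_image, ← Set.image_vadd, Set.image_image]
  simp only [vadd_eq_add, hf]

theorem exists_finset_isInteriorZ_vadd_closure_subset_map {n n' : ℕ}
    (g : (Fin n → ℤ) →+ (Fin n' → ℤ)) {M : AddSubmonoid (Fin n → ℤ)} {s : Fin n → ℤ}
    (hs : IsInteriorZ (M : Set _) s) {R' : Finset (Fin n' → ℤ)}
    (hR' : ∀ r ∈ R', IsInteriorZ (M.map g : Set _) r) :
    ∃ R : Finset (Fin n → ℤ), (∀ r ∈ R, IsInteriorZ (M : Set _) r) ∧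
      ∃ s₀ ∈ AddSubmonoid.closure (R : Set (Fin n → ℤ)), ∀ z ∈ AddSubmonoid.closure (R' : Set _),
        g s₀ + z ∈ (AddSubmonoid.closure (R : Set (Fin n → ℤ))).map g := by
  choose! p q N hp hq hgp hgq using fun r hr => hs.exists_lift_of_map g (hR' r hr)
  set R := insert s (R'.image p ∪ R'.image q)
  have hRint : ∀ r ∈ R, IsInteriorZ (M : Set _) r := by
    simp only [R, Finset.mem_insert, Finset.mem_union, Finset.mem_image]
    rintro _ (rfl | ⟨r, hr, rfl⟩ | ⟨r, hr, rfl⟩)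
    exacts [hs, hp r hr, hq r hr]
  set T := (AddSubmonoid.closure (R : Set (Fin n → ℤ))).map g
  have hgen : ∀ y ∈ R, g y ∈ T := fun y hy => ⟨y, AddSubmonoid.subset_closure hy, rfl⟩
  have hoffset : ∀ r ∈ R', ∃ o, ∀ k : ℕ, o + k • r ∈ T := fun r hr =>
    ⟨N r • g s, nsmul_add_nsmul_mem_of_add_mem T (hgen s (Finset.mem_insert_self _ _))
      (hgp r hr ▸ hgen (p r) (Finset.mem_insert_of_mem <|
        Finset.mem_union_left _ <| Finset.mem_image_of_mem p hr))
      (hgq r hr ▸ hgen (q r) (Finset.mem_insert_of_mem <|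
        Finset.mem_union_right _ <| Finset.mem_image_of_mem q hr))⟩
  obtain ⟨o, ho⟩ := exists_add_mem_of_forall_exists_add_nsmul_mem T hoffset
  obtain ⟨s₀, hs₀, hgs₀⟩ := add_zero o ▸ ho 0 (zero_mem _)
  exact ⟨R, hRint, s₀, hs₀, fun z hz => hgs₀ ▸ ho z hz⟩

theorem IsLinearization.image {n n' : ℕ} (g : (Fin n → ℤ) →+ (Fin n' → ℤ))
    {f : (Fin n → ℤ) → (Fin n' → ℤ)} (hf : ∀ x y, f (x + y) = f x + g y)
    {L X : Set (Fin n → ℤ)} (hL : IsLinearization L X) : IsLinearization (f '' L) (f '' X) := by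
  obtain ⟨b, _, ⟨P, rfl⟩, rfl, hXL, hX⟩ := hL
  have hM : AddSubmonoid.closure (P.image g : Set (Fin n' → ℤ))
      = (AddSubmonoid.closure (P : Set (Fin n → ℤ))).map g := by
    rw [Finset.coe_image, AddMonoidHom.map_mclosure]
  refine ⟨f b, _, ⟨P.image g, rfl⟩, ?_, Set.image_mono hXL, fun R' hR' => ?_⟩
  · rw [image_vadd_of_map_add g hf, hM, AddSubmonoid.coe_map]
  rw [hM] at hR'
  obtain ⟨R, hR, s₀, hs₀, hshift⟩ :=
    exists_finset_isInteriorZ_vadd_closure_subset_map g (isInteriorZ_sum_closure P) hR'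
  obtain ⟨x, -, hxR⟩ := hX R hR
  refine ⟨f (x + s₀), Set.mem_image_of_mem f (hxR (Set.vadd_mem_vadd_set hs₀)), ?_⟩
  rintro _ ⟨z, hz, rfl⟩
  obtain ⟨c, hc, hgc⟩ := hshift z hz
  refine ⟨x + c, hxR (Set.vadd_mem_vadd_set hc), ?_⟩
  change f (x + c) = f (x + s₀) + z
  rw [hf, hf, hgc, add_assoc]

theorem stmt3 {n n' : ℕ} (A : Matrix (Fin n') (Fin n) ℤ) (v : Fin n' → ℤ)
    (f : (Fin n → ℤ) → (Fin n' → ℤ)) (hf : ∀ x, f x = A.mulVec x + v)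
    (X : Set (Fin n → ℤ)) (hX : IsPseudoLinear X) :
    IsPseudoLinear (f '' X) ∧
      ∀ L, IsLinearization L X → IsLinearization (f '' L) (f '' X) := by
  have hf_add : ∀ x y, f (x + y) = f x + A.mulVecLin.toAddMonoidHom y := fun x y => by
    rw [hf, hf, Matrix.mulVec_add]
    exact add_right_comm _ _ _
  obtain ⟨L, hL⟩ := hX
  exact ⟨⟨_, hL.image _ hf_add⟩, fun _ hL' => hL'.image _ hf_add⟩
end

section
/- Let M ⊆ ℚ^n be a monoid, V₁, ..., V_k ⊆ ℚ^n be vector subspaces, and a₁, ..., a_k ∈ ℚ^n. If M ⊆ ⋃_{j=1}^k (a_j + V_j), then there exists an index j such that a_j ∈ V_j and M ⊆ a_j + V_j (hence M ⊆ V_j). -/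
open scoped Pointwise

/-- A monoid of ℚ^n: a set containing 0 and closed under addition. -/
def IsMonoidSet {n : ℕ} (M : Set (Fin n → ℚ)) : Prop :=
  (0 : Fin n → ℚ) ∈ M ∧ ∀ x ∈ M, ∀ y ∈ M, x + y ∈ M

/-!
If `x` lies in a monoid `M`, so does every `y + m • x` with `y ∈ M`, and by pigeonhole two of
them, `y + p • x` and `y + q • x`, fall into the same coset `a + V`. Their difference
`(q - p) • x` lies in `V`, so `x ∈ V` (characteristic zero) and then `y ∈ a + V`.
With `y = 0` this shows that `M` is covered by the `V_j` with `a_j ∈ V_j` alone. A monoid covered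
by finitely many subspaces lies in one of them: if some `x ∈ M` avoids every `V_j` but `V_i`,
the same argument puts every `y ∈ M` into `V_i`.
-/

variable {K E ι : Type*} [DivisionRing K] [CharZero K] [AddCommGroup E] [Module K E]

theorem Submodule.mem_and_mem_of_add_nsmul_mem {V : Submodule K E} {x z : E} {p q : ℕ}
    (hpq : p ≠ q) (hp : z + p • x ∈ V) (hq : z + q • x ∈ V) : x ∈ V ∧ z ∈ V := by
  have hdiff : ((q : K) - p) • x ∈ V := by
    convert V.sub_mem hq hp using 1
    rw [sub_smul, Nat.cast_smul_eq_nsmul, Nat.cast_smul_eq_nsmul]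
    abel
  have hx : x ∈ V := (V.smul_mem_iff (sub_ne_zero.2 (Nat.cast_injective.ne hpq.symm))).1 hdiff
  exact ⟨hx, by simpa using V.sub_mem hp (V.nsmul_mem hx p)⟩

theorem exists_mem_and_mem_of_forall_add_nsmul_mem (s : Finset ι) (V : ι → Submodule K E)
    (z : ι → E) (x : E) (h : ∀ m : ℕ, ∃ j ∈ s, z j + m • x ∈ V j) :
    ∃ j ∈ s, x ∈ V j ∧ z j ∈ V j := by
  choose f hfs hf using h
  obtain ⟨p, q, hpq, hfpq⟩ :=
    Finite.exists_ne_map_eq_of_infinite (fun m : ℕ => (⟨f m, hfs m⟩ : s))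
  have hq : z (f p) + q • x ∈ V (f p) := Subtype.mk.inj hfpq ▸ hf q
  exact ⟨f p, hfs p, Submodule.mem_and_mem_of_add_nsmul_mem hpq (hf p) hq⟩

namespace AddSubmonoid

theorem exists_mem_and_mem_of_forall_mem_vadd (S : AddSubmonoid E) (s : Finset ι)
    (a : ι → E) (V : ι → Submodule K E)
    (h : ∀ x ∈ S, ∃ j ∈ s, x ∈ a j +ᵥ (V j : Set E)) :
    ∀ x ∈ S, ∃ j ∈ s, a j ∈ V j ∧ x ∈ V j := by
  intro x hx
  obtain ⟨j, hj, hxj, haj⟩ := exists_mem_and_mem_of_forall_add_nsmul_mem s V (fun j => -a j) x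
    fun m => by
      simpa only [mem_leftAddCoset_iff, SetLike.mem_coe] using h (m • x) (S.nsmul_mem hx m)
  exact ⟨j, hj, neg_mem_iff.1 haj, hxj⟩

theorem exists_subset_of_forall_exists_mem (S : AddSubmonoid E) (s : Finset ι)
    (V : ι → Submodule K E) (h : ∀ x ∈ S, ∃ j ∈ s, x ∈ V j) :
    ∃ j ∈ s, ∀ x ∈ S, x ∈ V j := by
  classical
  induction s using Finset.induction_on with
  | empty => simpa using h 0 S.zero_mem
  | @insert i s _ ih =>
    by_cases hs : ∀ x ∈ S, ∃ j ∈ s, x ∈ V j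
    · obtain ⟨j, hj, hSj⟩ := ih hs
      exact ⟨j, Finset.mem_insert_of_mem hj, hSj⟩
    push Not at hs
    obtain ⟨x, hxS, hx⟩ := hs
    refine ⟨i, Finset.mem_insert_self i s, fun y hyS => ?_⟩
    obtain ⟨j, hj, hxj, hyj⟩ := exists_mem_and_mem_of_forall_add_nsmul_mem (insert i s) V
      (fun _ => y) x fun m => h _ (S.add_mem hyS (S.nsmul_mem hxS m))
    rcases Finset.mem_insert.1 hj with rfl | hj
    · exact hyj
    · exact absurd hxj (hx j hj)

end AddSubmonoid

theorem stmt4 {n k : ℕ} (M : Set (Fin n → ℚ)) (hM : IsMonoidSet M)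
    (V : Fin k → Submodule ℚ (Fin n → ℚ)) (a : Fin k → (Fin n → ℚ))
    (h : M ⊆ ⋃ j, (a j +ᵥ (V j : Set (Fin n → ℚ)))) :
    ∃ j, a j ∈ V j ∧ M ⊆ a j +ᵥ (V j : Set (Fin n → ℚ)) := by
  classical
  let S : AddSubmonoid (Fin n → ℚ) :=
    { carrier := M, add_mem' := fun hx hy => hM.2 _ hx _ hy, zero_mem' := hM.1 }
  have hcover : ∀ x ∈ S, ∃ j ∈ Finset.univ.filter (fun j => a j ∈ V j), x ∈ V j := by
    intro x hx
    obtain ⟨j, -, haj, hxj⟩ := S.exists_mem_and_mem_of_forall_mem_vadd Finset.univ a V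
      (fun y hy => by simpa using h hy) x hx
    exact ⟨j, Finset.mem_filter.2 ⟨Finset.mem_univ j, haj⟩, hxj⟩
  obtain ⟨j, hj, hSj⟩ := S.exists_subset_of_forall_exists_mem _ V hcover
  have haj : a j ∈ V j := (Finset.mem_filter.1 hj).2
  exact ⟨j, haj, fun x hx =>
    (mem_leftAddCoset_iff _).2 ((V j).add_mem ((V j).neg_mem haj) (hSj x hx))⟩
end

section
/- Let M ⊆ ℚ^n be a monoid and suppose M ⊆ V₁ ∪ ... ∪ V_k where each V_j is a vector subspace of ℚ^n (k ≥ 1). Then there exists j with M ⊆ V_j. -/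
variable {K E ι : Type*} [DivisionRing K] [CharZero K] [AddCommGroup E] [Module K E]

namespace Submodule

theorem exists_mem_mem_of_forall_nsmul_add_mem_biUnion {s : Finset ι} {V : ι → Submodule K E}
    {x y : E} (h : ∀ m : ℕ, m • x + y ∈ ⋃ i ∈ s, (V i : Set E)) :
    ∃ i ∈ s, x ∈ V i ∧ y ∈ V i := by
  simp only [Set.mem_iUnion₂, SetLike.mem_coe, exists_prop] at h
  choose f hfs hf using h
  obtain ⟨a, b, hab, hfab⟩ := s.finite_toSet.exists_lt_map_eq_of_forall_mem hfs
  have hx : x ∈ V (f a) := by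
    have hdiff : (b - a) • x ∈ V (f a) := by
      rw [sub_nsmul x hab.le, ← sub_eq_add_neg]
      have hb : b • x + y ∈ V (f a) := hfab ▸ hf b
      simpa only [add_sub_add_right_eq_sub] using sub_mem hb (hf a)
    have hba : ((b - a : ℕ) : K) ≠ 0 := by exact_mod_cast (Nat.sub_pos_of_lt hab).ne'
    rwa [← Nat.cast_smul_eq_nsmul K, smul_mem_iff _ hba] at hdiff
  exact ⟨f a, hfs a, hx, ((V (f a)).add_mem_iff_right (nsmul_mem hx a)).1 (hf a)⟩

end Submodule

theorem AddSubmonoid.exists_subset_of_subset_biUnion_submodule (M : AddSubmonoid E)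
    (V : ι → Submodule K E) (s : Finset ι) (h : (M : Set E) ⊆ ⋃ i ∈ s, (V i : Set E)) :
    ∃ i ∈ s, (M : Set E) ⊆ V i := by
  classical
  induction s using Finset.induction_on with
  | empty => simpa using h M.zero_mem
  | insert a s _ ih =>
    by_cases hMa : (M : Set E) ⊆ V a
    · exact ⟨a, Finset.mem_insert_self a s, hMa⟩
    obtain ⟨x, hxM, hxa⟩ := Set.not_subset.1 hMa
    obtain ⟨i, his, hiM⟩ := ih fun y hyM => by
      obtain ⟨i, hi, hxi, hyi⟩ := Submodule.exists_mem_mem_of_forall_nsmul_add_mem_biUnion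
        fun m => h (M.add_mem (M.nsmul_mem hxM m) hyM)
      have hia : i ≠ a := by rintro rfl; exact hxa hxi
      exact Set.mem_biUnion (Finset.mem_of_mem_insert_of_ne hi hia) hyi
    exact ⟨i, Finset.mem_insert_of_mem his, hiM⟩

theorem stmt5_general {n k : ℕ} (M : Set (Fin n → ℚ)) (hM : IsMonoidSet M)
    (V : Fin k → Submodule ℚ (Fin n → ℚ))
    (h : M ⊆ ⋃ j, (V j : Set (Fin n → ℚ))) :
    ∃ j, M ⊆ (V j : Set (Fin n → ℚ)) := by
  let M' : AddSubmonoid (Fin n → ℚ) :=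
    { carrier := M, add_mem' := fun hx hy => hM.2 _ hx _ hy, zero_mem' := hM.1 }
  obtain ⟨j, -, hj⟩ := M'.exists_subset_of_subset_biUnion_submodule V Finset.univ
    (by simpa [M'] using h)
  exact ⟨j, hj⟩

theorem stmt5 {n k : ℕ} (hk : 1 ≤ k) (M : Set (Fin n → ℚ)) (hM : IsMonoidSet M)
    (V : Fin k → Submodule ℚ (Fin n → ℚ))
    (h : M ⊆ ⋃ j, (V j : Set (Fin n → ℚ))) :
    ∃ j, M ⊆ (V j : Set (Fin n → ℚ)) :=
  stmt5_general M hM V h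
end

section
/- For every monoid M ⊆ ℚ^n, dim(M) = rank(V), where V is the vector space generated by M. -/
open scoped Pointwise

/-- The finite set `B` generates the set `V` as a ℚ-vector space. -/
def GeneratesQ {n : ℕ} (B : Finset (Fin n → ℚ)) (V : Set (Fin n → ℚ)) : Prop :=
  (Submodule.span ℚ (B : Set (Fin n → ℚ)) : Set (Fin n → ℚ)) = V

/-- The rank of a vector space `V ⊆ ℚ^n`: minimal cardinality of a finite generating set. -/
noncomputable def rankOf {n : ℕ} (V : Set (Fin n → ℚ)) : ℕ :=
  sInf {d | ∃ B : Finset (Fin n → ℚ), B.card = d ∧ GeneratesQ B V}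

-- Dimension of a subset of ℚ^n via finite covers by translates of vector spaces.
open Classical in
noncomputable def dimQ {n : ℕ} (X : Set (Fin n → ℚ)) : WithBot ℕ :=
  if X = ∅ then ⊥ else
    ↑(sInf {d : ℕ | ∃ (k : ℕ) (V : Fin k → Submodule ℚ (Fin n → ℚ))
        (a : Fin k → (Fin n → ℚ)),
        (∀ j, rankOf ((V j : Set (Fin n → ℚ))) ≤ d) ∧
        X ⊆ ⋃ j, (a j +ᵥ (V j : Set (Fin n → ℚ)))})

/-- Dimension of a subset of ℤ^n, via the canonical embedding ℤ^n → ℚ^n. -/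
noncomputable def dimZ {n : ℕ} (X : Set (Fin n → ℤ)) : WithBot ℕ :=
  dimQ ((fun (x : Fin n → ℤ) (i : Fin n) => (x i : ℚ)) '' X)

open Module in
lemma rankOf_coe {n : ℕ} (W : Submodule ℚ (Fin n → ℚ)) :
    rankOf (W : Set (Fin n → ℚ)) = finrank ℚ W := by
  classical
  have hmem : finrank ℚ W ∈
      {d | ∃ B : Finset (Fin n → ℚ), B.card = d ∧ GeneratesQ B (W : Set (Fin n → ℚ))} := by
    set b := Module.finBasis ℚ W with hb
    have hinj : Function.Injective (fun i => ((b i : W) : Fin n → ℚ)) :=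
      Subtype.val_injective.comp b.injective
    refine ⟨Finset.image (fun i => ((b i : W) : Fin n → ℚ)) Finset.univ, ?_, ?_⟩
    · rw [Finset.card_image_of_injective _ hinj, Finset.card_univ, Fintype.card_fin]
    · unfold GeneratesQ
      have : ((Finset.image (fun i => ((b i : W) : Fin n → ℚ)) Finset.univ : Finset _) :
          Set (Fin n → ℚ)) = W.subtype '' (Set.range b) := by
        ext v
        simp [Set.range_comp]
      rw [this, Submodule.span_image, b.span_eq, Submodule.map_top, Submodule.range_subtype]
  rw [rankOf]
  refine le_antisymm (Nat.sInf_le hmem) ?_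
  have hne : {d | ∃ B : Finset (Fin n → ℚ), B.card = d ∧ GeneratesQ B (W : Set (Fin n → ℚ))}.Nonempty :=
    ⟨_, hmem⟩
  obtain ⟨B, hcard, hgen⟩ := Nat.sInf_mem hne
  rw [← hcard]
  unfold GeneratesQ at hgen
  have : W = Submodule.span ℚ (B : Set (Fin n → ℚ)) := by
    apply Submodule.ext; intro x
    rw [← SetLike.mem_coe, ← SetLike.mem_coe, hgen]
  rw [this]
  exact finrank_span_finset_le_card B

lemma vandermonde_coeffs {r : ℕ} (q : Fin (r+1) → ℚ) (hq : Function.Injective q)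
    (c : Fin r → ℚ)
    (hcoeff : ∀ i : Fin r, ∑ k : Fin r, c k * (q k.succ ^ ((i:ℕ)+1) - q 0 ^ ((i:ℕ)+1)) = 0) :
    ∀ k, c k = 0 := by
  classical
  have hdet : (Matrix.vandermonde q).det ≠ 0 := by
    rw [Matrix.det_vandermonde]
    refine Finset.prod_ne_zero_iff.mpr fun i _ => Finset.prod_ne_zero_iff.mpr fun j hj => ?_
    have : i < j := Finset.mem_Ioi.mp hj
    exact sub_ne_zero.mpr fun h => absurd (hq h) (ne_of_gt this)
  set c' : Fin (r+1) → ℚ := Fin.cons (-(∑ k, c k)) c with hc'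
  have hvm : Matrix.vecMul c' (Matrix.vandermonde q) = 0 := by
    funext i
    show ∑ m, c' m * q m ^ (i:ℕ) = 0
    rw [Fin.sum_univ_succ]
    simp only [hc', Fin.cons_zero, Fin.cons_succ]
    rcases i with ⟨iv, hi⟩
    match iv, hi with
    | 0, hi => simp
    | (i0+1), hi =>
      have h := hcoeff ⟨i0, by omega⟩
      simp only [mul_sub, Finset.sum_sub_distrib] at h
      have h2 : ∑ k : Fin r, c k * q k.succ ^ (i0+1) = (∑ k, c k) * q 0 ^ (i0+1) := by
        rw [← Finset.sum_mul] at h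
        linarith
      simp only [Fin.val_mk] at *
      rw [h2]; ring
  have hz := Matrix.eq_zero_of_vecMul_eq_zero hdet hvm
  intro k
  have : c' k.succ = 0 := congrFun hz k.succ
  rwa [hc', Fin.cons_succ] at this

open Module in
theorem stmt7 {n : ℕ} (M : Set (Fin n → ℚ)) (hM : IsMonoidSet M) :
    dimQ M = (rankOf ((Submodule.span ℚ M : Submodule ℚ (Fin n → ℚ)) :
      Set (Fin n → ℚ)) : WithBot ℕ) := by
  classical
  have hMne : M ≠ ∅ := fun h => by simp [h] at hM; exact hM.1
  set r := finrank ℚ (Submodule.span ℚ M) with hr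
  rw [dimQ, if_neg hMne, rankOf_coe]
  norm_cast
  -- the covering set
  set S := {d : ℕ | ∃ (k : ℕ) (V : Fin k → Submodule ℚ (Fin n → ℚ))
      (a : Fin k → (Fin n → ℚ)),
      (∀ j, rankOf ((V j : Set (Fin n → ℚ))) ≤ d) ∧
      M ⊆ ⋃ j, (a j +ᵥ (V j : Set (Fin n → ℚ)))} with hS
  have hmem : r ∈ S := by
    refine ⟨1, fun _ => Submodule.span ℚ M, fun _ => 0, fun j => le_of_eq (rankOf_coe _), ?_⟩
    intro v hv
    refine Set.mem_iUnion.mpr ⟨0, ?_⟩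
    rw [zero_vadd]
    exact Submodule.subset_span hv
  -- closure of M under ℕ-smul and sums
  have hsmul : ∀ (m : ℕ) (v : Fin n → ℚ), v ∈ M → m • v ∈ M := by
    intro m v hv
    induction m with
    | zero => simpa using hM.1
    | succ m ih => rw [succ_nsmul]; exact hM.2 _ ih _ hv
  -- lower bound
  have hlower : ∀ d ∈ S, r ≤ d := by
    intro d hd
    obtain ⟨k, V, a, hrank, hcover⟩ := hd
    -- choose independent spanning subset of M
    obtain ⟨s, hsM, hspan, hli⟩ := exists_linearIndependent ℚ M
    have hsfin : s.Finite := hli.setFinite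
    haveI := hsfin.fintype
    have hcard : s.toFinset.card = r := by
      rw [hr, ← hspan, finrank_span_set_eq_card hli]
    set e := Finset.equivFinOfCardEq hcard with he
    set x : Fin r → (Fin n → ℚ) := fun i => ((e.symm i : s.toFinset) : Fin n → ℚ) with hx
    have hxM : ∀ i, x i ∈ M := fun i => hsM (by
      have := (e.symm i).2
      rwa [Set.mem_toFinset] at this)
    have hxli : LinearIndependent ℚ x := by
      have hφ : ∀ i, x i = Subtype.val ((fun (u : s.toFinset) =>
          (⟨(u : Fin n → ℚ), by have := u.2; rwa [Set.mem_toFinset] at this⟩ : s)) (e.symm i)) :=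
        fun i => rfl
      have : x = Subtype.val ∘ (fun (u : s.toFinset) =>
          (⟨(u : Fin n → ℚ), by have := u.2; rwa [Set.mem_toFinset] at this⟩ : s)) ∘ e.symm := by
        funext i; exact hφ i
      rw [this]
      refine hli.comp _ ?_
      refine Function.Injective.comp (fun u v huv => ?_) e.symm.injective
      simp only [Subtype.mk.injEq] at huv
      exact Subtype.ext huv
    have hxspan : Submodule.span ℚ (Set.range x) = Submodule.span ℚ M := by
      rw [← hspan]
      congr 1
      ext v
      constructor
      · rintro ⟨i, rfl⟩
        have := (e.symm i).2
        rwa [Set.mem_toFinset] at this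
      · intro hv
        exact ⟨e ⟨v, Set.mem_toFinset.mpr hv⟩, by simp [hx]⟩
    -- the curve of monoid elements
    set z : ℕ → (Fin n → ℚ) := fun u => ∑ i : Fin r, (u ^ ((i:ℕ)+1)) • x i with hzdef
    have hzM : ∀ u, z u ∈ M := by
      intro u
      refine Finset.sum_induction _ (· ∈ M) (fun p q hp hq => hM.2 p hp q hq) hM.1 ?_
      intro i _
      exact hsmul _ _ (hxM i)
    have hzexp : ∀ u : ℕ, z u = ∑ i : Fin r, ((u:ℚ) ^ ((i:ℕ)+1)) • x i := by
      intro u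
      rw [hzdef]
      refine Finset.sum_congr rfl fun i _ => ?_
      rw [← Nat.cast_smul_eq_nsmul ℚ]
      norm_cast
    -- pigeonhole
    have hg : ∀ u : ℕ, ∃ j, z u ∈ a j +ᵥ (V j : Set (Fin n → ℚ)) :=
      fun u => Set.mem_iUnion.mp (hcover (hzM u))
    set g : ℕ → Fin k := fun u => (hg u).choose with hgdef
    have hgspec : ∀ u, z u ∈ a (g u) +ᵥ (V (g u) : Set (Fin n → ℚ)) := fun u => (hg u).choose_spec
    obtain ⟨j, hjinf⟩ := Finite.exists_infinite_fiber g
    have hinf : (g ⁻¹' {j}).Infinite := Set.infinite_coe_iff.mp hjinf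
    set emb := hinf.natEmbedding with hemb
    set t : Fin (r+1) → ℕ := fun m => (emb m : ℕ) with ht
    have htinj : Function.Injective t := fun m m' h =>
      Fin.val_injective (emb.injective (Subtype.ext h))
    set q : Fin (r+1) → ℚ := fun m => (t m : ℚ) with hqdef
    have hqinj : Function.Injective q := fun m m' h => htinj (Nat.cast_injective h)
    have htfiber : ∀ m : Fin (r+1), g (t m) = j := fun m => (emb (m : ℕ)).2
    have hcos : ∀ m, z (t m) - a j ∈ V j := by
      intro m
      have h1 := hgspec (t m)
      rw [htfiber m] at h1
      obtain ⟨y, hy, hay⟩ := Set.mem_vadd_set.mp h1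
      rw [← hay]
      simpa [vadd_eq_add] using hy
    set dvec : Fin r → (Fin n → ℚ) := fun k' => z (t k'.succ) - z (t 0) with hdvec
    have hdV : ∀ k', dvec k' ∈ V j := by
      intro k'
      have h2 := sub_mem (hcos k'.succ) (hcos 0)
      rw [sub_sub_sub_cancel_right] at h2
      exact h2
    have hdexp : ∀ k', dvec k' =
        ∑ i : Fin r, (q k'.succ ^ ((i:ℕ)+1) - q 0 ^ ((i:ℕ)+1)) • x i := by
      intro k'
      rw [hdvec]
      show z (t k'.succ) - z (t 0) = _
      rw [hzexp, hzexp, ← Finset.sum_sub_distrib]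
      exact Finset.sum_congr rfl fun i _ => (sub_smul _ _ _).symm
    have hdli : LinearIndependent ℚ dvec := by
      rw [Fintype.linearIndependent_iff]
      intro c hc
      have hexp : ∑ i : Fin r,
          (∑ k' : Fin r, c k' * (q k'.succ ^ ((i:ℕ)+1) - q 0 ^ ((i:ℕ)+1))) • x i = 0 := by
        rw [← hc]
        calc ∑ i : Fin r, (∑ k' : Fin r, c k' * (q k'.succ ^ ((i:ℕ)+1) - q 0 ^ ((i:ℕ)+1))) • x i
            = ∑ i : Fin r, ∑ k' : Fin r,
                (c k' * (q k'.succ ^ ((i:ℕ)+1) - q 0 ^ ((i:ℕ)+1))) • x i := by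
              exact Finset.sum_congr rfl fun i _ => Finset.sum_smul
          _ = ∑ k' : Fin r, ∑ i : Fin r,
                (c k' * (q k'.succ ^ ((i:ℕ)+1) - q 0 ^ ((i:ℕ)+1))) • x i := Finset.sum_comm
          _ = ∑ k' : Fin r, c k' • dvec k' := by
              refine Finset.sum_congr rfl fun k' _ => ?_
              rw [hdexp, Finset.smul_sum]
              exact Finset.sum_congr rfl fun i _ => mul_smul _ _ _
      have hcoeff := Fintype.linearIndependent_iff.mp hxli _ hexp
      exact vandermonde_coeffs q hqinj c hcoeff
    have hfr : finrank ℚ (Submodule.span ℚ (Set.range dvec)) = r := by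
      rw [finrank_span_eq_card hdli, Fintype.card_fin]
    have hle : Submodule.span ℚ (Set.range dvec) ≤ Submodule.span ℚ M := by
      rw [Submodule.span_le]
      rintro _ ⟨k', rfl⟩
      exact sub_mem (Submodule.subset_span (hzM _)) (Submodule.subset_span (hzM _))
    have heq : Submodule.span ℚ (Set.range dvec) = Submodule.span ℚ M :=
      Submodule.eq_of_le_of_finrank_le hle (by rw [hfr, ← hr])
    have hVj : Submodule.span ℚ M ≤ V j := by
      rw [← heq, Submodule.span_le]
      rintro _ ⟨k', rfl⟩
      exact hdV k'
    calc r = finrank ℚ (Submodule.span ℚ M) := hr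
      _ ≤ finrank ℚ (V j) := Submodule.finrank_mono hVj
      _ = rankOf ((V j : Set (Fin n → ℚ))) := (rankOf_coe _).symm
      _ ≤ d := hrank j
  have hne : S.Nonempty := ⟨r, hmem⟩
  refine le_antisymm (Nat.sInf_le hmem) ?_
  exact hlower _ (Nat.sInf_mem hne)
end

section
/- For every finite sets P₁, P₂ ⊆ ℤ^n there exists a finite set P ⊆ ℤ^n such that P₁* ∩ P₂* = P*. Moreover, for every b₁, b₂ ∈ ℤ^n there exists a finite set B ⊆ ℤ^n such that (b₁ + P₁*) ∩ (b₂ + P₂*) = B + (P₁* ∩ P₂*). -/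
/-!
Write `M₁ = f(ℕᵐ)` and `M₂ = g(ℕᵏ)` for additive maps `f`, `g`. Then `M₁ ∩ M₂` is the image under
`(x, y) ↦ f x` of the submonoid `E = {(x, y) | f x = g y}` of `ℕᵐ × ℕᵏ`, and
`(b₁ + M₁) ∩ (b₂ + M₂)` is the image of `T = {(x, y) | b₁ + f x = b₂ + g y}`. Both `E` and `T` are
closed under differences of comparable elements (landing in `E`), and `T + E ⊆ T`. By Dickson's
lemma the minimal elements of any subset of `ℕᵐ × ℕᵏ` are finitely many and lie below every
element, so `E` is generated by its minimal nonzero elements and `T` is its minimal elements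
plus `E`.
-/

open scoped Pointwise

theorem exists_finset_subset_forall_exists_le {α : Type*} [PartialOrder α]
    [WellQuasiOrderedLE α] (s : Set α) : ∃ B : Finset α, ↑B ⊆ s ∧ ∀ x ∈ s, ∃ b ∈ B, b ≤ x := by
  have hmin : {x | Minimal (· ∈ s) x}.Finite :=
    WellQuasiOrderedLE.finite_of_isAntichain (setOfPred_minimal_antichain _)
  refine ⟨hmin.toFinset, fun x hx => (hmin.mem_toFinset.1 hx).prop, fun x hx => ?_⟩
  obtain ⟨b, hbx, hb⟩ := (Set.isPWO_of_wellQuasiOrderedLE s).exists_le_minimal hx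
  exact ⟨b, hmin.mem_toFinset.2 hb, hbx⟩

section CanonicallyOrdered

variable {α G : Type*} [AddCommMonoid α] [PartialOrder α] [CanonicallyOrderedAdd α]
  [Sub α] [OrderedSub α] [AddCommGroup G]

theorem AddMonoidHom.map_tsub_of_le (f : α →+ G) {u v : α} (h : v ≤ u) :
    f (u - v) = f u - f v :=
  eq_sub_of_add_eq (by rw [← map_add, tsub_add_cancel_of_le h])

variable [WellQuasiOrderedLE α]

theorem exists_finset_eq_add_of_tsub_mem (S : AddSubmonoid α) (T : Set α)
    (hsub : ∀ t ∈ T, ∀ t' ∈ T, t' ≤ t → t - t' ∈ S) (hadd : ∀ t ∈ T, ∀ s ∈ S, t + s ∈ T) :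
    ∃ B : Finset α, T = B + S := by
  obtain ⟨B, hBT, hB⟩ := exists_finset_subset_forall_exists_le T
  refine ⟨B, Set.Subset.antisymm (fun t ht => ?_) ?_⟩
  · obtain ⟨b, hbB, hbt⟩ := hB t ht
    exact ⟨b, hbB, t - b, hsub t ht b (hBT hbB) hbt, add_tsub_cancel_of_le hbt⟩
  · rintro _ ⟨b, hbB, s, hs, rfl⟩
    exact hadd b (hBT hbB) s hs

theorem AddMonoidHom.exists_finset_setOf_add_eq_add_eq_add_eqLocusM (f g : α →+ G)
    (b₁ b₂ : G) : ∃ B : Finset α, {x | b₁ + f x = b₂ + g x} = B + f.eqLocusM g := by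
  refine exists_finset_eq_add_of_tsub_mem _ _ (fun t (ht : _ = _) t' (ht' : _ = _) h => ?_)
    fun t (ht : _ = _) s (hs : f s = g s) => ?_
  · change f (t - t') = g (t - t')
    rw [f.map_tsub_of_le h, g.map_tsub_of_le h, ← add_sub_add_left_eq_sub (f t) (f t') b₁, ht,
      ht', add_sub_add_left_eq_sub]
  · change b₁ + f (t + s) = b₂ + g (t + s)
    rw [map_add, map_add, ← add_assoc, ht, hs, add_assoc]

variable [IsLeftCancelAdd α]

theorem AddSubmonoid.fg_of_tsub_mem (S : AddSubmonoid α)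
    (hS : ∀ u ∈ S, ∀ v ∈ S, v ≤ u → u - v ∈ S) : S.FG := by
  obtain ⟨B, hBS, hB⟩ := exists_finset_subset_forall_exists_le {x | x ∈ S ∧ x ≠ 0}
  refine ⟨B, le_antisymm (closure_le.2 fun b hb => (hBS hb).1) fun u hu => ?_⟩
  induction u using WellFoundedLT.induction with
  | ind u ih =>
    obtain rfl | hu₀ := eq_or_ne u 0
    · exact zero_mem _
    obtain ⟨b, hbB, hbu⟩ := hB u ⟨hu, hu₀⟩
    have hb := hBS hbB
    have hlt : u - b < u := tsub_le_self.lt_of_ne fun h =>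
      hb.2 <| (add_eq_left (a := u)).1 <| by nth_rw 1 [← h]; exact tsub_add_cancel_of_le hbu
    rw [← tsub_add_cancel_of_le hbu]
    exact add_mem (ih _ hlt (hS u hu b hb.1 hbu)) (subset_closure hbB)

theorem AddMonoidHom.eqLocusM_fg (f g : α →+ G) : (f.eqLocusM g).FG :=
  AddSubmonoid.fg_of_tsub_mem _ fun u (hu : f u = g u) v (hv : f v = g v) h => by
    change f (u - v) = g (u - v)
    rw [f.map_tsub_of_le h, g.map_tsub_of_le h, hu, hv]

end CanonicallyOrdered

namespace AddMonoidHom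

section Intersection

variable {α β G : Type*} [AddZeroClass α] [AddZeroClass β]

theorem mrange_inf_mrange [AddZeroClass G] (f : α →+ G) (g : β →+ G) :
    mrange f ⊓ mrange g =
      ((f.comp (fst α β)).eqLocusM (g.comp (snd α β))).map (f.comp (fst α β)) := by
  ext z
  simp only [AddSubmonoid.mem_inf, mem_mrange, AddSubmonoid.mem_map, mem_eqLocusM, coe_comp,
    coe_fst, coe_snd, Function.comp_apply, Prod.exists]
  constructor
  · rintro ⟨⟨x, rfl⟩, y, hy⟩
    exact ⟨x, y, hy.symm, rfl⟩
  · rintro ⟨x, y, hxy, rfl⟩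
    exact ⟨⟨x, rfl⟩, y, hxy.symm⟩

theorem vadd_mrange_inter_vadd_mrange [AddCommMonoid G] (f : α →+ G) (g : β →+ G) (b₁ b₂ : G) :
    (b₁ +ᵥ (mrange f : Set G)) ∩ (b₂ +ᵥ (mrange g : Set G)) =
      (b₁ +ᵥ ·) '' (f.comp (fst α β) ''
        {p | b₁ + f.comp (fst α β) p = b₂ + g.comp (snd α β) p}) := by
  ext z
  simp only [Set.mem_inter_iff, Set.mem_vadd_set, SetLike.mem_coe, mem_mrange, Set.mem_image,
    Set.mem_ofPred_eq, coe_comp, coe_fst, coe_snd, Function.comp_apply, Prod.exists, vadd_eq_add]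
  constructor
  · rintro ⟨⟨_, ⟨x, rfl⟩, rfl⟩, _, ⟨y, rfl⟩, hy⟩
    exact ⟨_, ⟨x, y, hy.symm, rfl⟩, rfl⟩
  · rintro ⟨_, ⟨x, y, hxy, rfl⟩, rfl⟩
    exact ⟨⟨_, ⟨x, rfl⟩, rfl⟩, _, ⟨y, rfl⟩, hxy.symm⟩

end Intersection

variable {α β G : Type*} [AddCommMonoid α] [PartialOrder α] [CanonicallyOrderedAdd α] [Sub α]
  [OrderedSub α] [WellQuasiOrderedLE α] [AddCommMonoid β] [PartialOrder β]
  [CanonicallyOrderedAdd β] [Sub β] [OrderedSub β] [WellQuasiOrderedLE β] [AddCommGroup G]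

theorem exists_finset_vadd_mrange_inter_vadd_mrange (f : α →+ G) (g : β →+ G) (b₁ b₂ : G) :
    ∃ B : Finset G, (b₁ +ᵥ (mrange f : Set G)) ∩ (b₂ +ᵥ (mrange g : Set G)) =
      B + ((mrange f : Set G) ∩ mrange g) := by
  classical
  obtain ⟨B, hB⟩ :=
    (f.comp (fst α β)).exists_finset_setOf_add_eq_add_eq_add_eqLocusM (g.comp (snd α β)) b₁ b₂
  refine ⟨(B.image (f.comp (fst α β))).image (b₁ +ᵥ ·), ?_⟩
  rw [vadd_mrange_inter_vadd_mrange, ← AddSubmonoid.coe_inf, mrange_inf_mrange,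
    AddSubmonoid.coe_map, Finset.coe_image, Finset.coe_image, hB, Set.image_add, Set.image_vadd,
    Set.image_vadd, vadd_add_assoc]

variable [IsLeftCancelAdd α] [IsLeftCancelAdd β]

theorem fg_mrange_inf_mrange (f : α →+ G) (g : β →+ G) : (mrange f ⊓ mrange g).FG := by
  rw [mrange_inf_mrange]
  exact (eqLocusM_fg _ _).map _

end AddMonoidHom

namespace AddSubmonoid.FG

variable {G : Type*} [AddCommGroup G] {M N : AddSubmonoid G}

theorem inf (hM : M.FG) (hN : N.FG) : (M ⊓ N).FG := by
  obtain ⟨m, f, rfl⟩ := fg_iff_exists_fin_addMonoidHom.1 hM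
  obtain ⟨k, g, rfl⟩ := fg_iff_exists_fin_addMonoidHom.1 hN
  exact f.fg_mrange_inf_mrange g

theorem exists_finset_vadd_inter_vadd_eq_add (hM : M.FG) (hN : N.FG) (b₁ b₂ : G) :
    ∃ B : Finset G, (b₁ +ᵥ (M : Set G)) ∩ (b₂ +ᵥ (N : Set G)) = B + ((M : Set G) ∩ N) := by
  obtain ⟨m, f, rfl⟩ := fg_iff_exists_fin_addMonoidHom.1 hM
  obtain ⟨k, g, rfl⟩ := fg_iff_exists_fin_addMonoidHom.1 hN
  exact f.exists_finset_vadd_mrange_inter_vadd_mrange g b₁ b₂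

end AddSubmonoid.FG

theorem stmt10 {n : ℕ} (P₁ P₂ : Finset (Fin n → ℤ)) :
    (∃ P : Finset (Fin n → ℤ),
      (AddSubmonoid.closure (P₁ : Set (Fin n → ℤ)) : Set (Fin n → ℤ)) ∩
        (AddSubmonoid.closure (P₂ : Set (Fin n → ℤ)) : Set (Fin n → ℤ)) =
      (AddSubmonoid.closure (P : Set (Fin n → ℤ)) : Set (Fin n → ℤ))) ∧
    ∀ b₁ b₂ : Fin n → ℤ, ∃ B : Finset (Fin n → ℤ),
      (b₁ +ᵥ (AddSubmonoid.closure (P₁ : Set (Fin n → ℤ)) : Set (Fin n → ℤ))) ∩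
        (b₂ +ᵥ (AddSubmonoid.closure (P₂ : Set (Fin n → ℤ)) : Set (Fin n → ℤ))) =
      (B : Set (Fin n → ℤ)) +
        ((AddSubmonoid.closure (P₁ : Set (Fin n → ℤ)) : Set (Fin n → ℤ)) ∩
          (AddSubmonoid.closure (P₂ : Set (Fin n → ℤ)) : Set (Fin n → ℤ))) := by
  have hP₁ : (AddSubmonoid.closure (P₁ : Set (Fin n → ℤ))).FG := ⟨P₁, rfl⟩
  have hP₂ : (AddSubmonoid.closure (P₂ : Set (Fin n → ℤ))).FG := ⟨P₂, rfl⟩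
  obtain ⟨P, hP⟩ := hP₁.inf hP₂
  exact ⟨⟨P, by rw [hP]; rfl⟩, hP₁.exists_finset_vadd_inter_vadd_eq_add hP₂⟩
end

section
/- Let V = (Σ, n, δ) be a vector addition system and suppose s →^{σ a σ'} s' in V with σ, σ' ∈ Σ*, a ∈ Σ, and s, s' ∈ ℕ^n. If δ(a) ≥ 0 (componentwise) then s →^{a σ σ'} s'; if δ(a) ≤ 0 then s →^{σ σ' a} s'. -/
/-- `Run δ s w t` : the word `w` labels a run of the VAS with displacements `δ`
from configuration `s` to configuration `t`, all intermediate configurations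
staying in ℕ^n (modeled as nonnegative vectors of ℤ^n). -/
def Run {A : Type*} {n : ℕ} (δ : A → (Fin n → ℤ)) :
    (Fin n → ℤ) → List A → (Fin n → ℤ) → Prop
  | s, [], t => s = t ∧ ∀ i, 0 ≤ s i
  | s, a :: w, t => (∀ i, 0 ≤ s i) ∧ Run δ (s + δ a) w t

lemma run_first_nonneg {A : Type*} {n : ℕ} {δ : A → (Fin n → ℤ)}
    {s t : Fin n → ℤ} {w : List A} (h : Run δ s w t) : ∀ i, 0 ≤ s i := by
  cases w with
  | nil => exact h.2
  | cons a w => exact h.1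

lemma run_last_nonneg {A : Type*} {n : ℕ} {δ : A → (Fin n → ℤ)}
    {s t : Fin n → ℤ} {w : List A} (h : Run δ s w t) : ∀ i, 0 ≤ t i := by
  induction w generalizing s with
  | nil => exact h.1 ▸ h.2
  | cons a w ih => exact ih h.2

lemma run_append_iff {A : Type*} {n : ℕ} {δ : A → (Fin n → ℤ)}
    {s t : Fin n → ℤ} {u v : List A} :
    Run δ s (u ++ v) t ↔ ∃ m, Run δ s u m ∧ Run δ m v t := by
  induction u generalizing s with
  | nil =>
    simp only [List.nil_append]
    constructor
    · intro h; exact ⟨s, ⟨rfl, run_first_nonneg h⟩, h⟩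
    · rintro ⟨m, ⟨rfl, _⟩, h⟩; exact h
  | cons a u ih =>
    constructor
    · rintro ⟨hs, h⟩
      obtain ⟨m, h1, h2⟩ := ih.mp h
      exact ⟨m, ⟨hs, h1⟩, h2⟩
    · rintro ⟨m, ⟨hs, h1⟩, h2⟩
      exact ⟨hs, ih.mpr ⟨m, h1, h2⟩⟩

lemma run_shift {A : Type*} {n : ℕ} {δ : A → (Fin n → ℤ)}
    {s t v : Fin n → ℤ} {w : List A} (hv : ∀ i, 0 ≤ v i)
    (h : Run δ s w t) : Run δ (s + v) w (t + v) := by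
  induction w generalizing s with
  | nil => exact ⟨by rw [h.1], fun i => add_nonneg (h.2 i) (hv i)⟩
  | cons a w ih =>
    refine ⟨fun i => add_nonneg (h.1 i) (hv i), ?_⟩
    rw [add_right_comm]
    exact ih h.2

theorem stmt15 {A : Type*} {n : ℕ} (δ : A → (Fin n → ℤ))
    (s s' : Fin n → ℤ) (σ σ' : List A) (a : A)
    (h : Run δ s (σ ++ a :: σ') s') :
    ((∀ i, 0 ≤ δ a i) → Run δ s (a :: (σ ++ σ')) s') ∧
    ((∀ i, δ a i ≤ 0) → Run δ s ((σ ++ σ') ++ [a]) s') := by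
  obtain ⟨m, h1, h2⟩ := run_append_iff.mp h
  obtain ⟨hm, h3⟩ := h2
  have hs := run_first_nonneg h1
  have hs' := run_last_nonneg h3
  constructor
  · intro ha
    refine ⟨hs, run_append_iff.mpr ⟨m + δ a, run_shift ha h1, h3⟩⟩
  · intro ha
    have hv : ∀ i, 0 ≤ (-δ a) i := fun i => by simpa using ha i
    refine run_append_iff.mpr ⟨s' + -δ a, run_append_iff.mpr ⟨m, h1, ?_⟩, ?_⟩
    · have := run_shift hv h3
      convert this using 2
      funext i; simp
    · refine ⟨run_last_nonneg (run_shift hv h3), ?_⟩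
      have hx : s' + -δ a + δ a = s' := by funext i; simp
      rw [hx]; exact ⟨rfl, hs'⟩
end
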